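/- arXiv:1309.7430 — 7 statements merged into one kernel-verified Lean document; each statement's English description precedes it below -/
import Mathlib

section
/- Let P = (U⊗V) Λ (U⊗V)^H where U ∈ ℂ^{N_t×N_t} and V ∈ ℂ^{N_r×N_r} are unitary and Λ = diag(Λ_1,…,Λ_{N_t}) with diagonal nonnegative blocks Λ_i of size N_r. For the pilot matrix S = √ρ (u_i ⊗ I_{N_r}) where u_i is the i-th column of U and ρ, σ² > 0, the Kalman measurement update P' = P − P S (S^H P S + σ² I_{N_r})^{-1} S^H P satisfies P' = (U⊗V)(Λ − (e_i e_i^T) ⊗ [ρ Λ_i (ρΛ_i + σ² I)^{-1} Λ_i])(U⊗V)^H, so that the i-th block of the eigenvalue matrix becomes σ²(ρΛ_i + σ²I)^{-1}Λ_i and all other blocks are unchanged. -/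
/-!
Conjugation by `W = U ⊗ V` carries the update of `P = W Λ Wᴴ` to the update of `Λ` with pilot
`Wᴴ S`, and `Wᴴ S = √ρ (e_i ⊗ I) (1 ⊗ Vᴴ)` because `Uᴴ u_i = e_i` (the column `e_i` is
`single i 0 1`). The unitary right factor `1 ⊗ Vᴴ` drops out since the noise covariance `σ² I` is
invariant under it. The remaining pilot `√ρ (e_i ⊗ I)` only sees the block `Λ_i` of the diagonal
matrix `Λ`, so the innovation covariance is `ρ Λ_i + σ² I`, diagonal, and the correction is
`e_i e_iᵀ ⊗ ρ Λ_i (ρ Λ_i + σ² I)⁻¹ Λ_i`.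
-/

open Matrix Kronecker

section KalmanUpdate

variable {n m α : Type*} [Fintype n] [Fintype m] [DecidableEq m] [CommRing α] [StarRing α]

noncomputable def kalmanUpdate (P : Matrix n n α) (S : Matrix n m α) (R : Matrix m m α) :
    Matrix n n α :=
  P - P * S * (Sᴴ * P * S + R)⁻¹ * Sᴴ * P

theorem kalmanUpdate_mul_mul_conjTranspose (W Λ : Matrix n n α) (S : Matrix n m α)
    (R : Matrix m m α) :
    kalmanUpdate (W * Λ * Wᴴ) S R = W * kalmanUpdate Λ (Wᴴ * S) R * Wᴴ := by
  simp only [kalmanUpdate, conjTranspose_mul, conjTranspose_conjTranspose, Matrix.mul_sub,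
    Matrix.sub_mul, Matrix.mul_assoc]

theorem kalmanUpdate_mul_unitary (Λ : Matrix n n α) (B : Matrix n m α) (R : Matrix m m α)
    {Y : Matrix m m α} (hY : Y ∈ unitary (Matrix m m α)) :
    kalmanUpdate Λ (B * Y) (Yᴴ * R * Y) = kalmanUpdate Λ B R := by
  have hYY : Yᴴ * Y = 1 := hY.1
  have hYY' : Y * Yᴴ = 1 := hY.2
  have hgram : (B * Y)ᴴ * Λ * (B * Y) + Yᴴ * R * Y = Yᴴ * (Bᴴ * Λ * B + R) * Y := by
    simp only [conjTranspose_mul, Matrix.mul_add, Matrix.add_mul, Matrix.mul_assoc]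
  have hinv : (Yᴴ * (Bᴴ * Λ * B + R) * Y)⁻¹ = Yᴴ * (Bᴴ * Λ * B + R)⁻¹ * Y := by
    rw [Matrix.mul_inv_rev, Matrix.mul_inv_rev, Matrix.inv_eq_left_inv hYY,
      Matrix.inv_eq_right_inv hYY]
    simp only [Matrix.mul_assoc]
  rw [kalmanUpdate, kalmanUpdate, hgram, hinv, conjTranspose_mul]
  simp only [Matrix.mul_assoc, hYY', Matrix.one_mul, ← Matrix.mul_assoc Y Yᴴ]

theorem kalmanUpdate_mul_unitary_smul_one (Λ : Matrix n n α) (B : Matrix n m α) (c : α)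
    {Y : Matrix m m α} (hY : Y ∈ unitary (Matrix m m α)) :
    kalmanUpdate Λ (B * Y) (c • 1) = kalmanUpdate Λ B (c • 1) := by
  have hYY : Yᴴ * Y = 1 := hY.1
  rw [← kalmanUpdate_mul_unitary Λ B (c • 1) hY, Matrix.mul_smul, Matrix.mul_one,
    Matrix.smul_mul, hYY]

end KalmanUpdate

section BlockDiagonal

variable {ι κ α : Type*} [Fintype ι] [DecidableEq ι] [Fintype κ] [DecidableEq κ]

theorem of_col_eq_mul_single [Semiring α] {m : Type*} (M : Matrix m ι α) (i : ι) :
    (of fun k (_ : Fin 1) => M k i) = M * single i (0 : Fin 1) (1 : α) := by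
  ext k j
  rw [Subsingleton.elim j 0, mul_single_apply_same, mul_one, of_apply]

theorem single_zero_mul_single_zero [Semiring α] (i : ι) :
    single (0 : Fin 1) i (1 : α) * single i (0 : Fin 1) (1 : α) = 1 := by
  rw [single_mul_single_same, one_mul]
  ext a b
  fin_cases a; fin_cases b
  simp

variable [CommSemiring α]

theorem diagonal_mul_single_kronecker {o p : Type*} [DecidableEq o]
    (l : ι → κ → α) (i : ι) (j : o) (c : α) (C : Matrix κ p α) :
    diagonal (fun x : ι × κ => l x.1 x.2) * (single i j c ⊗ₖ C) =
      single i j c ⊗ₖ (diagonal (l i) * C) := by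
  ext ⟨t, a⟩ ⟨s, b⟩
  simp only [diagonal_mul, kroneckerMap_apply, single_apply]
  split_ifs with h
  · rw [h.1]; ring
  · simp

theorem single_kronecker_mul_diagonal {o p : Type*} [DecidableEq o]
    (l : ι → κ → α) (i : ι) (j : o) (c : α) (C : Matrix p κ α) :
    (single j i c ⊗ₖ C) * diagonal (fun x : ι × κ => l x.1 x.2) =
      single j i c ⊗ₖ (C * diagonal (l i)) := by
  ext ⟨t, a⟩ ⟨s, b⟩
  simp only [mul_diagonal, kroneckerMap_apply, single_apply]
  split_ifs with h
  · rw [← h.2]; ring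
  · simp

theorem single_kronecker_one_mul_diagonal_mul_single_kronecker_one (l : ι → κ → α) (i : ι) :
    (single (0 : Fin 1) i (1 : α) ⊗ₖ (1 : Matrix κ κ α)) * diagonal (fun x : ι × κ => l x.1 x.2) *
        (single i (0 : Fin 1) (1 : α) ⊗ₖ (1 : Matrix κ κ α)) =
      1 ⊗ₖ diagonal (l i) := by
  rw [single_kronecker_mul_diagonal, ← mul_kronecker_mul, single_zero_mul_single_zero,
    Matrix.one_mul, Matrix.mul_one]

theorem diagonal_mul_single_kronecker_one_mul_kronecker (l : ι → κ → α) (i : ι)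
    (M : Matrix κ κ α) :
    diagonal (fun x : ι × κ => l x.1 x.2) * (single i (0 : Fin 1) (1 : α) ⊗ₖ (1 : Matrix κ κ α)) *
        ((1 : Matrix (Fin 1) (Fin 1) α) ⊗ₖ M) *
        (single (0 : Fin 1) i (1 : α) ⊗ₖ (1 : Matrix κ κ α)) *
        diagonal (fun x : ι × κ => l x.1 x.2) =
      single i i 1 ⊗ₖ (diagonal (l i) * M * diagonal (l i)) := by
  rw [diagonal_mul_single_kronecker, Matrix.mul_assoc _ (single 0 i 1 ⊗ₖ 1),
    single_kronecker_mul_diagonal, ← mul_kronecker_mul, ← mul_kronecker_mul, Matrix.mul_one,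
    Matrix.one_mul, Matrix.mul_one, single_mul_single_same, mul_one]

end BlockDiagonal

theorem kalmanUpdate_diagonal_single_kronecker_one {ι κ : Type*} [Fintype ι] [DecidableEq ι]
    [Fintype κ] [DecidableEq κ] (l : ι → κ → ℝ) (i : ι) {ρ σ2 : ℝ} (hρ : 0 ≤ ρ)
    (hden : ∀ r, ρ * l i r + σ2 ≠ 0) :
    kalmanUpdate (diagonal fun x : ι × κ => (l x.1 x.2 : ℂ))
        ((Real.sqrt ρ : ℂ) • (single i (0 : Fin 1) (1 : ℂ) ⊗ₖ (1 : Matrix κ κ ℂ))) ((σ2 : ℂ) • 1) =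
      diagonal (fun x : ι × κ => (l x.1 x.2 : ℂ)) -
        single i i (1 : ℂ) ⊗ₖ diagonal (fun r => ((ρ * l i r ^ 2 / (ρ * l i r + σ2) : ℝ) : ℂ)) := by
  have hρ' : (Real.sqrt ρ : ℂ) * (Real.sqrt ρ : ℂ) = ρ := by
    rw [← Complex.ofReal_mul, Real.mul_self_sqrt hρ]
  have hB : ((Real.sqrt ρ : ℂ) • (single i (0 : Fin 1) (1 : ℂ) ⊗ₖ (1 : Matrix κ κ ℂ)))ᴴ =
      (Real.sqrt ρ : ℂ) • (single (0 : Fin 1) i (1 : ℂ) ⊗ₖ (1 : Matrix κ κ ℂ)) := by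
    simp [conjTranspose_kronecker, conjTranspose_single]
  have hinv : ((ρ : ℂ) • ((1 : Matrix (Fin 1) (Fin 1) ℂ) ⊗ₖ diagonal (fun r => (l i r : ℂ))) +
      (σ2 : ℂ) • 1)⁻¹ = 1 ⊗ₖ diagonal (fun r => ((ρ * l i r + σ2 : ℝ) : ℂ)⁻¹) := by
    have hcov : (ρ : ℂ) • ((1 : Matrix (Fin 1) (Fin 1) ℂ) ⊗ₖ diagonal (fun r => (l i r : ℂ))) +
        (σ2 : ℂ) • 1 = 1 ⊗ₖ diagonal (fun r => ((ρ * l i r + σ2 : ℝ) : ℂ)) := by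
      ext ⟨a, r⟩ ⟨b, s⟩
      fin_cases a; fin_cases b
      by_cases h : r = s
      · subst h; simp
      · simp [h]
    rw [hcov]
    refine Matrix.inv_eq_left_inv ?_
    rw [← mul_kronecker_mul, Matrix.one_mul, diagonal_mul_diagonal, ← diagonal_one,
      ← one_kronecker_one, ← diagonal_one]
    congr 2
    funext r
    exact inv_mul_cancel₀ (Complex.ofReal_ne_zero.mpr (hden r))
  rw [kalmanUpdate, hB]
  simp only [Matrix.smul_mul, Matrix.mul_smul, smul_smul, hρ']
  rw [single_kronecker_one_mul_diagonal_mul_single_kronecker_one (fun t r => (l t r : ℂ)), hinv,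
    diagonal_mul_single_kronecker_one_mul_kronecker (fun t r => (l t r : ℂ)),
    diagonal_mul_diagonal, diagonal_mul_diagonal, ← kronecker_smul, ← diagonal_smul]
  congr 3
  funext r
  simp only [Pi.smul_apply, smul_eq_mul]
  push_cast
  ring

/-- the Kalman measurement update with pilot `S = √ρ (u_i ⊗ I)` only
changes the `i`-th diagonal block of the eigenvalue matrix. -/
theorem stmt2 {Nt Nr : ℕ}
    (U : Matrix (Fin Nt) (Fin Nt) ℂ) (V : Matrix (Fin Nr) (Fin Nr) ℂ)
    (hU : Uᴴ * U = 1 ∧ U * Uᴴ = 1) (hV : Vᴴ * V = 1 ∧ V * Vᴴ = 1)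
    (l : Fin Nt → Fin Nr → ℝ) (hl : ∀ i r, 0 ≤ l i r)
    (ρ σ2 : ℝ) (hρ : 0 < ρ) (hσ : 0 < σ2) (i : Fin Nt)
    (P : Matrix (Fin Nt × Fin Nr) (Fin Nt × Fin Nr) ℂ)
    (hP : P = (U ⊗ₖ V) * Matrix.diagonal (fun x => (l x.1 x.2 : ℂ)) * (U ⊗ₖ V)ᴴ)
    (S : Matrix (Fin Nt × Fin Nr) (Fin 1 × Fin Nr) ℂ)
    (hS : S = (Real.sqrt ρ : ℂ) •
      ((Matrix.of fun k (_ : Fin 1) => U k i) ⊗ₖ (1 : Matrix (Fin Nr) (Fin Nr) ℂ))) :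
    P - P * S * (Sᴴ * P * S + (σ2 : ℂ) • 1)⁻¹ * Sᴴ * P =
      (U ⊗ₖ V) *
        (Matrix.diagonal (fun x => (l x.1 x.2 : ℂ)) -
          (Matrix.single i i (1 : ℂ)) ⊗ₖ
            Matrix.diagonal (fun r => ((ρ * (l i r) ^ 2 / (ρ * l i r + σ2) : ℝ) : ℂ))) *
        (U ⊗ₖ V)ᴴ ∧
    ∀ r, l i r - ρ * (l i r) ^ 2 / (ρ * l i r + σ2) = σ2 * l i r / (ρ * l i r + σ2) := by
  have hden : ∀ r, ρ * l i r + σ2 ≠ 0 := fun r =>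
    (add_pos_of_nonneg_of_pos (mul_nonneg hρ.le (hl i r)) hσ).ne'
  have hWS : (U ⊗ₖ V)ᴴ * S =
      ((Real.sqrt ρ : ℂ) • (single i (0 : Fin 1) (1 : ℂ) ⊗ₖ (1 : Matrix (Fin Nr) (Fin Nr) ℂ))) *
        ((1 : Matrix (Fin 1) (Fin 1) ℂ) ⊗ₖ Vᴴ) := by
    rw [hS, of_col_eq_mul_single, conjTranspose_kronecker, Matrix.mul_smul, Matrix.smul_mul,
      ← mul_kronecker_mul, ← mul_kronecker_mul, ← Matrix.mul_assoc, hU.1, Matrix.one_mul,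
      Matrix.mul_one, Matrix.mul_one, Matrix.one_mul]
  have hY : (1 : Matrix (Fin 1) (Fin 1) ℂ) ⊗ₖ Vᴴ ∈ unitary _ :=
    kronecker_mem_unitary (one_mem _) (Unitary.star_mem hV)
  refine ⟨?_, fun r => ?_⟩
  · change kalmanUpdate P S ((σ2 : ℂ) • 1) = _
    rw [hP, kalmanUpdate_mul_mul_conjTranspose, hWS,
      kalmanUpdate_mul_unitary_smul_one _ _ _ hY,
      kalmanUpdate_diagonal_single_kronecker_one l i hρ.le hden]
  · rw [eq_div_iff (hden r), sub_mul, div_mul_cancel₀ _ (hden r)]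
    ring
end

section
/- Let P = (U⊗V) Λ (U⊗V)^H with U, V unitary and Λ = diag(Λ_1,…,Λ_{N_t}) block diagonal with nonnegative diagonal blocks Λ_i = diag(λ_{i1},…,λ_{iN_r}). For a unit-norm scaled pilot vector s = Σ_m c_m u_m with Σ_m |c_m|² = ρ and S = s ⊗ I_{N_r}, the trace of the update term satisfies tr(P S (S^H P S + σ² I)^{-1} S^H P) = Σ_{j=1}^{N_r} (Σ_m |c_m|² λ_{mj}²)/(Σ_n |c_n|² λ_{nj} + σ²). -/
open Matrix Kronecker

lemma kron_conjT {l m n p : Type*} (A : Matrix l m ℂ) (B : Matrix n p ℂ) :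
    (A ⊗ₖ B)ᴴ = Aᴴ ⊗ₖ Bᴴ := by
  ext ⟨i, j⟩ ⟨k, r⟩
  simp [Matrix.conjTranspose_apply, star_mul', mul_comm]

lemma mulDiagMul {n m p : Type*} [Fintype n] [Fintype m] [DecidableEq m]
    (A : Matrix n m ℂ) (B : Matrix m p ℂ) (f : m → ℂ) (i : n) (k : p) :
    (A * Matrix.diagonal f * B) i k = ∑ y, A i y * f y * B y k := by
  rw [Matrix.mul_apply]
  simp [Matrix.mul_diagonal]

lemma keyLemma {Nt Nr : ℕ}
    (V : Matrix (Fin Nr) (Fin Nr) ℂ)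
    (c : Fin Nt → ℂ)
    (cm : Matrix (Fin Nt) (Fin 1) ℂ) (hcm : cm = Matrix.of (fun k _ => c k))
    (f : Fin Nt × Fin Nr → ℂ) :
    (cmᴴ ⊗ₖ V) * Matrix.diagonal f * (cm ⊗ₖ Vᴴ) =
      ((1 : Matrix (Fin 1) (Fin 1) ℂ) ⊗ₖ V) *
        Matrix.diagonal (fun x : Fin 1 × Fin Nr => ∑ m, ((‖c m‖ : ℂ))^2 * f (m, x.2)) *
        ((1 : Matrix (Fin 1) (Fin 1) ℂ) ⊗ₖ V)ᴴ := by
  rw [kron_conjT, Matrix.conjTranspose_one]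
  ext ⟨a, j⟩ ⟨b, j'⟩
  rw [mulDiagMul, mulDiagMul]
  simp only [Matrix.kroneckerMap_apply, Fintype.sum_prod_type, hcm,
    Matrix.conjTranspose_apply, Matrix.of_apply, Matrix.one_apply,
    Subsingleton.elim a b, if_pos rfl, Fin.sum_univ_one]
  rw [Finset.sum_comm]
  obtain rfl : b = 0 := Subsingleton.elim _ _
  simp only [if_pos rfl, if_true, eq_self_iff_true, one_mul, mul_one, one_pow]
  refine Finset.sum_congr rfl fun r _ => ?_
  rw [Finset.mul_sum, Finset.sum_mul]
  refine Finset.sum_congr rfl fun m _ => ?_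
  have : ((‖c m‖ : ℂ))^2 = star (c m) * c m := by
    rw [← Complex.conj_mul']; rfl
  rw [this]
  ring


/-- trace of the Kalman update term for a pilot
`s = Σ_m c_m u_m`, `S = s ⊗ I`, in closed form. -/
theorem stmt3 {Nt Nr : ℕ}
    (U : Matrix (Fin Nt) (Fin Nt) ℂ) (V : Matrix (Fin Nr) (Fin Nr) ℂ)
    (hU : Uᴴ * U = 1 ∧ U * Uᴴ = 1) (hV : Vᴴ * V = 1 ∧ V * Vᴴ = 1)
    (l : Fin Nt → Fin Nr → ℝ) (hl : ∀ i r, 0 ≤ l i r)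
    (ρ σ2 : ℝ) (hρ : 0 < ρ) (hσ : 0 < σ2)
    (c : Fin Nt → ℂ) (hc : ∑ m, ‖c m‖ ^ 2 = ρ)
    (P : Matrix (Fin Nt × Fin Nr) (Fin Nt × Fin Nr) ℂ)
    (hP : P = (U ⊗ₖ V) * Matrix.diagonal (fun x => (l x.1 x.2 : ℂ)) * (U ⊗ₖ V)ᴴ)
    (S : Matrix (Fin Nt × Fin Nr) (Fin 1 × Fin Nr) ℂ)
    (hS : S = (Matrix.of fun k (_ : Fin 1) => ∑ m, c m * U k m) ⊗ₖ
      (1 : Matrix (Fin Nr) (Fin Nr) ℂ)) :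
    Matrix.trace (P * S * (Sᴴ * P * S + (σ2 : ℂ) • 1)⁻¹ * Sᴴ * P) =
      ((∑ j, (∑ m, ‖c m‖ ^ 2 * (l m j) ^ 2) / (∑ n, ‖c n‖ ^ 2 * l n j + σ2) : ℝ) : ℂ) := by
  obtain ⟨hU1, hU2⟩ := hU
  obtain ⟨hV1, hV2⟩ := hV
  set cm : Matrix (Fin Nt) (Fin 1) ℂ := Matrix.of (fun k _ => c k) with hcm
  set W := U ⊗ₖ V with hW
  set Q := (1 : Matrix (Fin 1) (Fin 1) ℂ) ⊗ₖ V with hQ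
  have hW1 : Wᴴ * W = 1 := by
    rw [hW, kron_conjT, ← Matrix.mul_kronecker_mul, hU1, hV1, Matrix.one_kronecker_one]
  have hQ1 : Qᴴ * Q = 1 := by
    rw [hQ, kron_conjT, ← Matrix.mul_kronecker_mul, hV1, Matrix.conjTranspose_one,
      Matrix.one_mul, Matrix.one_kronecker_one]
  have hQ2 : Q * Qᴴ = 1 := by
    rw [hQ, kron_conjT, ← Matrix.mul_kronecker_mul, hV2, Matrix.conjTranspose_one,
      Matrix.mul_one, Matrix.one_kronecker_one]
  have hS' : S = (U * cm) ⊗ₖ (1 : Matrix (Fin Nr) (Fin Nr) ℂ) := by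
    rw [hS]
    congr 1
    ext k j
    simp [Matrix.mul_apply, hcm, mul_comm]
  have hSH : Sᴴ = (cmᴴ * Uᴴ) ⊗ₖ (1 : Matrix (Fin Nr) (Fin Nr) ℂ) := by
    rw [hS', kron_conjT, Matrix.conjTranspose_one, Matrix.conjTranspose_mul]
  have hWS : Wᴴ * S = cm ⊗ₖ Vᴴ := by
    rw [hS', hW, kron_conjT, ← Matrix.mul_kronecker_mul, Matrix.mul_one,
      ← Matrix.mul_assoc, hU1, Matrix.one_mul]
  have hSW : Sᴴ * W = cmᴴ ⊗ₖ V := by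
    rw [hSH, hW, ← Matrix.mul_kronecker_mul, Matrix.one_mul, Matrix.mul_assoc, hU1,
      Matrix.mul_one]
  -- diagonal data
  set d : Fin 1 × Fin Nr → ℝ := fun x => ∑ n, ‖c n‖ ^ 2 * l n x.2 + σ2 with hd
  have hdpos : ∀ x, (0:ℝ) < d x := by
    intro x
    exact add_pos_of_nonneg_of_pos (Finset.sum_nonneg fun n _ =>
      mul_nonneg (by positivity) (hl n x.2)) hσ
  have hdne : ∀ x, ((d x : ℂ)) ≠ 0 := fun x => by
    exact_mod_cast Complex.ofReal_ne_zero.2 (hdpos x).ne'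
  -- M = S^H P S + σ² I
  have hM : Sᴴ * P * S + (σ2 : ℂ) • 1 = Q * Matrix.diagonal (fun x => (d x : ℂ)) * Qᴴ := by
    have h1 : Sᴴ * P * S = (Sᴴ * W) * Matrix.diagonal (fun x : Fin Nt × Fin Nr => (l x.1 x.2 : ℂ)) * (Wᴴ * S) := by
      rw [hP]
      simp only [Matrix.mul_assoc]
    rw [h1, hSW, hWS, keyLemma V c cm hcm]
    have h2 : (σ2 : ℂ) • (1 : Matrix (Fin 1 × Fin Nr) (Fin 1 × Fin Nr) ℂ) =
        Q * Matrix.diagonal (fun _ => (σ2 : ℂ)) * Qᴴ := by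
      rw [← Matrix.smul_one_eq_diagonal, Matrix.mul_smul, Matrix.mul_one, Matrix.smul_mul, hQ2]
    rw [h2, ← hQ, ← Matrix.add_mul, ← Matrix.mul_add, Matrix.diagonal_add]
    congr 1
    funext x
    simp only [hd]
    push_cast
    ring
  -- inverse of M
  have hMinv : (Sᴴ * P * S + (σ2 : ℂ) • 1)⁻¹ =
      Q * Matrix.diagonal (fun x => ((d x : ℂ))⁻¹) * Qᴴ := by
    apply Matrix.inv_eq_right_inv
    rw [hM]
    calc Q * Matrix.diagonal (fun x => (d x : ℂ)) * Qᴴ *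
          (Q * Matrix.diagonal (fun x => ((d x : ℂ))⁻¹) * Qᴴ)
        = Q * (Matrix.diagonal (fun x => (d x : ℂ)) * (Qᴴ * Q) *
            Matrix.diagonal (fun x => ((d x : ℂ))⁻¹)) * Qᴴ := by
          simp only [Matrix.mul_assoc]
      _ = 1 := by
          rw [hQ1, Matrix.mul_one, Matrix.diagonal_mul_diagonal]
          have : (fun x => (d x : ℂ) * ((d x : ℂ))⁻¹) = fun _ => (1 : ℂ) := by
            funext x; exact mul_inv_cancel₀ (hdne x)
          rw [this, Matrix.diagonal_one, Matrix.mul_one, hQ2]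
  -- the squared middle matrix
  have hSPPS : Sᴴ * P * (P * S) =
      Q * Matrix.diagonal (fun x : Fin 1 × Fin Nr =>
        ∑ m, ((‖c m‖ : ℂ))^2 * ((l m x.2 : ℂ) * (l m x.2 : ℂ))) * Qᴴ := by
    have : Sᴴ * P * (P * S) = (Sᴴ * W) *
        (Matrix.diagonal (fun x : Fin Nt × Fin Nr => (l x.1 x.2 : ℂ)) * (Wᴴ * W) *
          Matrix.diagonal (fun x : Fin Nt × Fin Nr => (l x.1 x.2 : ℂ))) * (Wᴴ * S) := by
      rw [hP]
      simp only [Matrix.mul_assoc]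
    rw [this, hW1, Matrix.mul_one, Matrix.diagonal_mul_diagonal, hSW, hWS,
      keyLemma V c cm hcm]
  -- trace manipulation
  rw [hMinv]
  have htr : Matrix.trace (P * S * (Q * Matrix.diagonal (fun x => ((d x : ℂ))⁻¹) * Qᴴ) * Sᴴ * P) =
      Matrix.trace ((Sᴴ * P * (P * S)) * (Q * Matrix.diagonal (fun x => ((d x : ℂ))⁻¹) * Qᴴ)) := by
    rw [Matrix.trace_mul_comm]
    rw [show P * (P * S * (Q * Matrix.diagonal (fun x => ((d x : ℂ))⁻¹) * Qᴴ) * Sᴴ) =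
      (P * (P * S * (Q * Matrix.diagonal (fun x => ((d x : ℂ))⁻¹) * Qᴴ))) * Sᴴ by
        simp only [Matrix.mul_assoc]]
    rw [Matrix.trace_mul_comm]
    congr 1
    simp only [Matrix.mul_assoc]
  rw [htr, hSPPS]
  have htr2 : Matrix.trace ((Q * Matrix.diagonal (fun x : Fin 1 × Fin Nr =>
        ∑ m, ((‖c m‖ : ℂ))^2 * ((l m x.2 : ℂ) * (l m x.2 : ℂ))) * Qᴴ) *
      (Q * Matrix.diagonal (fun x => ((d x : ℂ))⁻¹) * Qᴴ)) =
      Matrix.trace (Matrix.diagonal (fun x : Fin 1 × Fin Nr =>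
        ∑ m, ((‖c m‖ : ℂ))^2 * ((l m x.2 : ℂ) * (l m x.2 : ℂ))) *
        Matrix.diagonal (fun x => ((d x : ℂ))⁻¹)) := by
    rw [Matrix.trace_mul_comm]
    calc Matrix.trace (Q * Matrix.diagonal (fun x => ((d x : ℂ))⁻¹) * Qᴴ *
          (Q * Matrix.diagonal (fun x : Fin 1 × Fin Nr =>
            ∑ m, ((‖c m‖ : ℂ))^2 * ((l m x.2 : ℂ) * (l m x.2 : ℂ))) * Qᴴ))
        = Matrix.trace (Q * (Matrix.diagonal (fun x => ((d x : ℂ))⁻¹) * (Qᴴ * Q) *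
            Matrix.diagonal (fun x : Fin 1 × Fin Nr =>
              ∑ m, ((‖c m‖ : ℂ))^2 * ((l m x.2 : ℂ) * (l m x.2 : ℂ)))) * Qᴴ) := by
          congr 1
          simp only [Matrix.mul_assoc]
      _ = _ := by
          rw [hQ1, Matrix.mul_one, Matrix.trace_mul_comm, ← Matrix.mul_assoc, ← Matrix.mul_assoc,
            hQ1, Matrix.one_mul, Matrix.diagonal_mul_diagonal, Matrix.diagonal_mul_diagonal]
          congr 1
          refine congrArg Matrix.diagonal (funext fun x => ?_)
          ring
  rw [htr2, Matrix.diagonal_mul_diagonal, Matrix.trace_diagonal]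
  rw [Fintype.sum_prod_type, Fin.sum_univ_one]
  push_cast
  refine Finset.sum_congr rfl fun j _ => ?_
  rw [div_eq_mul_inv]
  push_cast [hd]
  ring
end

section
/- Fix nonnegative reals λ_{ij} for 1 ≤ i ≤ N_t, 1 ≤ j ≤ N_r, and ρ, σ² > 0. Define J(c) = Σ_{j=1}^{N_r} (Σ_m |c_m|² λ_{mj}²)/(Σ_n |c_n|² λ_{nj} + σ²) over complex vectors c with Σ_m |c_m|² = ρ. Then for each i, the coordinate vector c = √ρ e_i achieves the value J(√ρ e_i) = Σ_j ρ λ_{ij}² / (ρ λ_{ij} + σ²), and each such coordinate vector is a stationary point of J on the sphere Σ_m |c_m|² = ρ. -/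
/-- the coordinate vector `c = √ρ e_i` achieves the value
`Σ_j ρλ_{ij}²/(ρλ_{ij}+σ²)` of `J` and is a stationary point of `J` on the
sphere `Σ_m |c_m|² = ρ` (the gradient of the Lagrangian vanishes for
`ν = -Σ_j λ_{ij}² σ² /(ρλ_{ij}+σ²)²`). -/
theorem stmt4 {Nt Nr : ℕ} (l : Fin Nt → Fin Nr → ℝ) (hl : ∀ i j, 0 ≤ l i j)
    (ρ σ2 : ℝ) (hρ : 0 < ρ) (hσ : 0 < σ2)
    (J : (Fin Nt → ℂ) → ℝ)
    (hJ : ∀ c, J c = ∑ j, (∑ m, ‖c m‖ ^ 2 * (l m j) ^ 2) /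
      (∑ n, ‖c n‖ ^ 2 * l n j + σ2))
    (i : Fin Nt) (c : Fin Nt → ℂ)
    (hc : c = fun m => if m = i then (Real.sqrt ρ : ℂ) else 0) :
    (∑ m, ‖c m‖ ^ 2 = ρ) ∧
    J c = ∑ j, ρ * (l i j) ^ 2 / (ρ * l i j + σ2) ∧
    ∃ ν : ℝ, ν = -∑ j, (l i j) ^ 2 * σ2 / (ρ * l i j + σ2) ^ 2 ∧
      ∀ m, ((∑ j, ((l m j) ^ 2 * (∑ n, ‖c n‖ ^ 2 * l n j + σ2) -
              l m j * (∑ n', ‖c n'‖ ^ 2 * (l n' j) ^ 2)) /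
            (∑ n, ‖c n‖ ^ 2 * l n j + σ2) ^ 2 : ℝ) : ℂ) * c m + (ν : ℂ) * c m = 0 := by
  have hnorm : ∀ m, ‖c m‖ ^ 2 = if m = i then ρ else 0 := by
    intro m
    subst hc
    by_cases h : m = i <;> simp [h, Complex.norm_real, abs_of_nonneg (Real.sqrt_nonneg ρ),
      Real.sq_sqrt hρ.le]
  have hsum : ∀ (f : Fin Nt → ℝ), (∑ m, ‖c m‖ ^ 2 * f m) = ρ * f i := by
    intro f
    have h1 : ∀ m, ‖c m‖ ^ 2 * f m = if m = i then ρ * f i else 0 := by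
      intro m
      rw [hnorm]
      by_cases h : m = i <;> simp [h]
    calc (∑ m, ‖c m‖ ^ 2 * f m) = ∑ m, if m = i then ρ * f i else 0 :=
          Finset.sum_congr rfl fun m _ => h1 m
      _ = ρ * f i := by simp
  have hS : ∑ m, ‖c m‖ ^ 2 = ρ := by
    have := hsum (fun _ => 1); simpa using this
  refine ⟨hS, ?_, ?_⟩
  · rw [hJ]
    refine Finset.sum_congr rfl fun j _ => ?_
    rw [hsum (fun m => (l m j) ^ 2), hsum (fun m => l m j)]
  · refine ⟨_, rfl, fun m => ?_⟩
    by_cases h : m = i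
    · subst h
      have key : (∑ j, ((l m j) ^ 2 * (∑ n, ‖c n‖ ^ 2 * l n j + σ2) -
              l m j * (∑ n', ‖c n'‖ ^ 2 * (l n' j) ^ 2)) /
            (∑ n, ‖c n‖ ^ 2 * l n j + σ2) ^ 2)
          = ∑ j, (l m j) ^ 2 * σ2 / (ρ * l m j + σ2) ^ 2 := by
        refine Finset.sum_congr rfl fun j _ => ?_
        rw [hsum (fun n => l n j), hsum (fun n => (l n j) ^ 2)]
        have hlm := hl m j
        have hd : 0 < ρ * l m j + σ2 := by positivity
        field_simp
        ring
      rw [key]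
      push_cast
      ring
    · have : c m = 0 := by subst hc; simp [h]
      simp [this]
end

section
/- In the MISO case (N_r = 1), given a positive semidefinite prediction error covariance matrix P ∈ ℂ^{N_t×N_t} and σ², ρ > 0, the vector s with ‖s‖² = ρ maximizing (s^H P² s)/(s^H P s + σ²) is s = √ρ u₁, where u₁ is a unit eigenvector of P corresponding to its largest eigenvalue; the maximum value is ρλ₁²/(ρλ₁ + σ²) where λ₁ is the largest eigenvalue of P. -/
open Matrix ComplexOrder

/-!
Write `a = sᴴPs`. On the sphere `‖s‖² = ρ` the Rayleigh bound gives `0 ≤ a ≤ ρλ₁`, and applied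
to `P^{1/2}s` it gives `sᴴP²s ≤ λ₁a`. Hence the ratio is at most `λ₁a/(a + σ²)`, which is
increasing in `a`, so it is at most its value `ρλ₁²/(ρλ₁ + σ²)` at `a = ρλ₁`; the scaled
eigenvector `√ρ u₁` attains this.
-/

namespace Matrix

variable {𝕜 n : Type*} [RCLike 𝕜] [Fintype n]

open scoped MatrixOrder in
theorem PosSemidef.re_dotProduct_mulVec_mulVec_le {P : Matrix n n 𝕜} (hP : P.PosSemidef)
    {lam : ℝ} (hmax : ∀ x, RCLike.re (star x ⬝ᵥ (P *ᵥ x)) ≤ lam * RCLike.re (star x ⬝ᵥ x))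
    (s : n → 𝕜) :
    RCLike.re (star s ⬝ᵥ (P *ᵥ (P *ᵥ s))) ≤ lam * RCLike.re (star s ⬝ᵥ (P *ᵥ s)) := by
  classical
  set Q := CFC.sqrt P
  have hQ : Qᴴ = Q := (CFC.sqrt_nonneg P).posSemidef.1
  have hQQ : Q * Q = P := CFC.sqrt_mul_sqrt_self P hP.nonneg
  have hadj (v : n → 𝕜) : star (Q *ᵥ s) ⬝ᵥ (Q *ᵥ v) = star s ⬝ᵥ (P *ᵥ v) := by
    rw [star_mulVec, hQ, ← dotProduct_mulVec, mulVec_mulVec, hQQ]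
  have hcomm : P *ᵥ (Q *ᵥ s) = Q *ᵥ (P *ᵥ s) := by
    rw [mulVec_mulVec, mulVec_mulVec, ← hQQ, mul_assoc]
  simpa only [hcomm, hadj] using hmax (Q *ᵥ s)

theorem dotProduct_mulVec_of_mulVec_eq_smul {P : Matrix n n 𝕜} {μ : 𝕜} {v : n → 𝕜}
    (hv : P *ᵥ v = μ • v) : star v ⬝ᵥ (P *ᵥ v) = μ * (star v ⬝ᵥ v) := by
  rw [hv, dotProduct_smul, smul_eq_mul]

end Matrix

theorem mul_div_add_le_mul_div_add {lam σ a b : ℝ} (hlam : 0 ≤ lam) (hσ : 0 < σ) (ha : 0 ≤ a)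
    (hab : a ≤ b) : lam * a / (a + σ) ≤ lam * b / (b + σ) := by
  rw [div_le_div_iff₀ (by positivity) (by linarith)]
  nlinarith [mul_nonneg (mul_nonneg hlam hσ.le) (sub_nonneg.2 hab)]

/-- MISO case: over vectors `s` with `‖s‖² = ρ`, the Rayleigh-type
ratio `(sᴴP²s)/(sᴴPs+σ²)` is maximized by `s = √ρ u₁` with `u₁` a unit
eigenvector for the largest eigenvalue `λ₁` of `P`, with maximum
`ρλ₁²/(ρλ₁+σ²)`. -/
theorem stmt5 {Nt : ℕ} (P : Matrix (Fin Nt) (Fin Nt) ℂ) (hP : P.PosSemidef)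
    (ρ σ2 : ℝ) (hρ : 0 < ρ) (hσ : 0 < σ2)
    (lam1 : ℝ) (u : Fin Nt → ℂ)
    (hu_norm : star u ⬝ᵥ u = 1)
    (hu_eig : P *ᵥ u = (lam1 : ℂ) • u)
    (hmax : ∀ x : Fin Nt → ℂ, (star x ⬝ᵥ (P *ᵥ x)).re ≤ lam1 * (star x ⬝ᵥ x).re) :
    (∀ s : Fin Nt → ℂ, star s ⬝ᵥ s = (ρ : ℂ) →
        (star s ⬝ᵥ (P *ᵥ (P *ᵥ s))).re / ((star s ⬝ᵥ (P *ᵥ s)).re + σ2) ≤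
          ρ * lam1 ^ 2 / (ρ * lam1 + σ2)) ∧
    (star ((Real.sqrt ρ : ℂ) • u) ⬝ᵥ (P *ᵥ (P *ᵥ ((Real.sqrt ρ : ℂ) • u)))).re /
        ((star ((Real.sqrt ρ : ℂ) • u) ⬝ᵥ (P *ᵥ ((Real.sqrt ρ : ℂ) • u))).re + σ2) =
      ρ * lam1 ^ 2 / (ρ * lam1 + σ2) := by
  have hlam1 : 0 ≤ lam1 := by
    simpa [dotProduct_mulVec_of_mulVec_eq_smul hu_eig, hu_norm] using hP.re_dotProduct_nonneg u
  refine ⟨fun s hs => ?_, ?_⟩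
  · have hPs_nonneg := hP.re_dotProduct_nonneg s
    have hPs_le : (star s ⬝ᵥ (P *ᵥ s)).re ≤ ρ * lam1 := by simpa [hs, mul_comm] using hmax s
    calc _ ≤ lam1 * (star s ⬝ᵥ (P *ᵥ s)).re / ((star s ⬝ᵥ (P *ᵥ s)).re + σ2) :=
          div_le_div_of_nonneg_right (hP.re_dotProduct_mulVec_mulVec_le hmax s) (by positivity)
      _ ≤ lam1 * (ρ * lam1) / (ρ * lam1 + σ2) :=
          mul_div_add_le_mul_div_add hlam1 hσ hPs_nonneg hPs_le
      _ = ρ * lam1 ^ 2 / (ρ * lam1 + σ2) := by ring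
  · set s : Fin Nt → ℂ := (Real.sqrt ρ : ℂ) • u
    have hs_eig : P *ᵥ s = (lam1 : ℂ) • s := by rw [mulVec_smul, hu_eig, smul_comm]
    have hs_norm : star s ⬝ᵥ s = ρ := by
      simp [s, star_smul, hu_norm, ← Complex.ofReal_mul, Real.mul_self_sqrt hρ.le]
    simp only [hs_eig, mulVec_smul, dotProduct_smul, hs_norm, smul_eq_mul]
    norm_cast
    ring
end

section
/- (Lemma for power allocation) Let Λ', Λ₁ be N_r × N_r nonnegative diagonal matrices with Λ₁ ⪰ Λ' (entrywise on diagonals), let a ∈ (0,1], σ² > 0, p ≥ 1 an integer, and ρ₁, ρ₂ ≥ 0. Define Λ(ρ) = σ²(ρM + σ²I)^{-1}M where M = a^{2p}Λ' + (1−a^{2p})Λ₁. For ε ∈ [0, ρ₁], let g(ε) = tr( σ² D_ε ((ρ₂+ε) D_ε + σ² I)^{-1} ) where D_ε = a^{2q}[σ²((ρ₁−ε)M + σ²I)^{-1}M] + (1−a^{2q})Λ₁ for integer q ≥ 1. Then g(0) ≥ g(ε) for all ε ∈ [0, ρ₁]; i.e., shifting power from the earlier pilot use to the later pilot use does not increase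 the final estimation error. -/
/-!
Entrywise, everything is the posterior variance `P t m = σ² m / (t m + σ²)`, whose reciprocal
`1/m + t/σ²` is affine in the SNR `t`. Hence `P (ρ₁ - ε) m - P ρ₁ m = (ε/σ²) P (ρ₁ - ε) m P ρ₁ m`.
Mixing with `Λ₁ ≥ M ≥ P` only shrinks the left side (by the factor `a^{2q}`) and enlarges the
right side, so `D_ε - D_0 ≤ (ε/σ²) D_ε D_0`, which says exactly that the extra `ε` of SNR in the
second pilot gains more than the first pilot lost: `1/D_ε + (ρ₂ + ε)/σ² ≥ 1/D_0 + ρ₂/σ²`.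
-/

/-- The diagonal entries of `Λ(ρ) = σ²(ρM + σ²I)⁻¹M`. -/
noncomputable def posteriorVariance (σ2 t m : ℝ) : ℝ := σ2 * m / (t * m + σ2)

section posteriorVariance

variable {σ2 s t m x y : ℝ}

lemma posteriorVariance_nonneg (hσ : 0 < σ2) (ht : 0 ≤ t) (hm : 0 ≤ m) :
    0 ≤ posteriorVariance σ2 t m := by
  unfold posteriorVariance; positivity

lemma posteriorVariance_le (hσ : 0 < σ2) (ht : 0 ≤ t) (hm : 0 ≤ m) :
    posteriorVariance σ2 t m ≤ m := by
  unfold posteriorVariance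
  rw [div_le_iff₀ (by positivity)]
  nlinarith [mul_nonneg (mul_nonneg ht hm) hm]

lemma posteriorVariance_sub_posteriorVariance (hσ : σ2 ≠ 0) (hs : s * m + σ2 ≠ 0)
    (ht : t * m + σ2 ≠ 0) :
    posteriorVariance σ2 s m - posteriorVariance σ2 t m =
      (t - s) / σ2 * posteriorVariance σ2 s m * posteriorVariance σ2 t m := by
  unfold posteriorVariance
  rw [div_sub_div _ _ hs ht, div_mul_div_comm, div_mul_div_comm, div_eq_div_iff (by positivity)
    (by simp [hσ, hs, ht])]
  ring

lemma posteriorVariance_le_posteriorVariance (hσ : 0 < σ2) (hs : 0 ≤ s) (ht : 0 ≤ t)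
    (hx : 0 ≤ x) (hy : 0 ≤ y) (hxy : σ2 * (y - x) ≤ (t - s) * x * y) :
    posteriorVariance σ2 t y ≤ posteriorVariance σ2 s x := by
  unfold posteriorVariance
  rw [div_le_div_iff₀ (by positivity) (by positivity)]
  nlinarith [mul_le_mul_of_nonneg_left hxy hσ.le]

end posteriorVariance

lemma mix_sub_mix_le {A l c x y : ℝ} (hA1 : A ≤ 1) (hc : 0 ≤ c)
    (hx : 0 ≤ x) (hy : 0 ≤ y) (hxl : x ≤ l) (hyl : y ≤ l) (hxy : y - x = c * x * y) :
    (A * y + (1 - A) * l) - (A * x + (1 - A) * l) ≤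
      c * (A * x + (1 - A) * l) * (A * y + (1 - A) * l) := by
  have hxX : x ≤ A * x + (1 - A) * l := by nlinarith
  have hyY : y ≤ A * y + (1 - A) * l := by nlinarith
  have hcxy : 0 ≤ c * x * y := by positivity
  have hcX : 0 ≤ c * (A * x + (1 - A) * l) := mul_nonneg hc (hx.trans hxX)
  calc (A * y + (1 - A) * l) - (A * x + (1 - A) * l) = A * (c * x * y) := by rw [← hxy]; ring
    _ ≤ c * x * y := mul_le_of_le_one_left hcxy hA1
    _ ≤ c * (A * x + (1 - A) * l) * (A * y + (1 - A) * l) := by gcongr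

theorem posteriorVariance_mix_shift_le {σ2 A m l ρ r ε : ℝ} (hσ : 0 < σ2)
    (hA1 : A ≤ 1) (hm : 0 ≤ m) (hml : m ≤ l) (hr : 0 ≤ r)
    (hε : 0 ≤ ε) (hερ : ε ≤ ρ) :
    posteriorVariance σ2 (r + ε) (A * posteriorVariance σ2 (ρ - ε) m + (1 - A) * l) ≤
      posteriorVariance σ2 r (A * posteriorVariance σ2 ρ m + (1 - A) * l) := by
  have hρε : 0 ≤ ρ - ε := sub_nonneg.2 hερ
  have hρ : 0 ≤ ρ := hε.trans hερ
  have h0 := posteriorVariance_nonneg hσ hρ hm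
  have hε0 := posteriorVariance_nonneg hσ hρε hm
  have hl0 := (posteriorVariance_le hσ hρ hm).trans hml
  have hlε := (posteriorVariance_le hσ hρε hm).trans hml
  have hshift := posteriorVariance_sub_posteriorVariance (m := m) hσ.ne'
    (s := ρ - ε) (t := ρ) (by positivity) (by positivity)
  rw [sub_sub_cancel, mul_right_comm] at hshift
  have hmix := mix_sub_mix_le hA1 (div_nonneg hε hσ.le) h0 hε0 hl0 hlε hshift
  apply posteriorVariance_le_posteriorVariance hσ hr (by positivity) (by nlinarith)
    (by nlinarith)
  rw [add_sub_cancel_left]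
  calc _ ≤ σ2 * (ε / σ2 * _ * _) := mul_le_mul_of_nonneg_left hmix hσ.le
    _ = _ := by field_simp

theorem stmt9_general {Nr : ℕ} (l' l1 : Fin Nr → ℝ)
    (hl' : ∀ j, 0 ≤ l' j) (hle : ∀ j, l' j ≤ l1 j)
    (a : ℝ) (ha : 0 < a) (ha1 : a ≤ 1) (σ2 : ℝ) (hσ : 0 < σ2)
    (p q : ℕ)
    (ρ1 ρ2 : ℝ) (hρ2 : 0 ≤ ρ2)
    (M : Fin Nr → ℝ) (hM : ∀ j, M j = a ^ (2 * p) * l' j + (1 - a ^ (2 * p)) * l1 j)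
    (D : ℝ → Fin Nr → ℝ)
    (hD : ∀ ε j, D ε j =
      a ^ (2 * q) * (σ2 * M j / ((ρ1 - ε) * M j + σ2)) + (1 - a ^ (2 * q)) * l1 j)
    (g : ℝ → ℝ)
    (hg : ∀ ε, g ε = ∑ j, σ2 * D ε j / ((ρ2 + ε) * D ε j + σ2)) :
    ∀ ε, 0 ≤ ε → ε ≤ ρ1 → g ε ≤ g 0 := by
  intro ε hε hερ
  have hp0 : 0 ≤ a ^ (2 * p) := by positivity
  have hp1 : a ^ (2 * p) ≤ 1 := pow_le_one₀ ha.le ha1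
  rw [hg, hg]
  refine Finset.sum_le_sum fun j _ => ?_
  have hM0 : 0 ≤ M j := by rw [hM]; nlinarith [hl' j, hle j]
  have hMl : M j ≤ l1 j := by rw [hM]; nlinarith [hle j]
  rw [hD, hD, sub_zero]
  simpa only [posteriorVariance, add_zero] using posteriorVariance_mix_shift_le hσ
    (pow_le_one₀ ha.le ha1) hM0 hMl hρ2 hε hερ

/-- power allocation lemma: shifting pilot power `ε` from the
earlier pilot use to the later pilot use does not increase the final estimation
error. All matrices involved are nonnegative diagonal and are represented by
their diagonal entry functions; the trace is the corresponding sum. -/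
theorem stmt9 {Nr : ℕ} (l' l1 : Fin Nr → ℝ)
    (hl' : ∀ j, 0 ≤ l' j) (hle : ∀ j, l' j ≤ l1 j)
    (a : ℝ) (ha : 0 < a) (ha1 : a ≤ 1) (σ2 : ℝ) (hσ : 0 < σ2)
    (p q : ℕ) (hp : 1 ≤ p) (hq : 1 ≤ q)
    (ρ1 ρ2 : ℝ) (hρ1 : 0 ≤ ρ1) (hρ2 : 0 ≤ ρ2)
    (M : Fin Nr → ℝ) (hM : ∀ j, M j = a ^ (2 * p) * l' j + (1 - a ^ (2 * p)) * l1 j)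
    (D : ℝ → Fin Nr → ℝ)
    (hD : ∀ ε j, D ε j =
      a ^ (2 * q) * (σ2 * M j / ((ρ1 - ε) * M j + σ2)) + (1 - a ^ (2 * q)) * l1 j)
    (g : ℝ → ℝ)
    (hg : ∀ ε, g ε = ∑ j, σ2 * D ε j / ((ρ2 + ε) * D ε j + σ2)) :
    ∀ ε, 0 ≤ ε → ε ≤ ρ1 → g ε ≤ g 0 :=
  stmt9_general l' l1 hl' hle a ha ha1 σ2 hσ p q ρ1 ρ2 hρ2 M hM D hD g hg
end

section
/- (Proposition 4 key step) Let P ∈ ℂ^{N_t×N_t} be Hermitian positive semidefinite with eigendecomposition P = U Λ U^H, Λ = diag(λ₁ ≥ … ≥ λ_{N_t}), and let ρ, σ² > 0, M_p ≤ N_t. Over all S ∈ ℂ^{N_t×M_p} with S^H S = ρ I_{M_p}, the quantity tr( (S^H P S + σ² I_{M_p})^{-1} S^H P² S ) is maximized by S = √ρ · [u₁,…,u_{M_p}] (the M_p dominant eigenvectors), and the maximum value is Σ_{i=1}^{M_p} ρλ_i²/(ρλ_i + σ²). -/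
/-!
Write `s = σ²/ρ` and `Q = P + sI`. Since `SᴴS = ρI`, the matrix to be inverted is `SᴴQS = TᴴT`
with `T = Q^{1/2} S`, and `SᴴP²S = Tᴴ M T` with `M = Q^{-1/2} P² Q^{-1/2}`, whose eigenvalues are
`μᵢ = λᵢ²/(λᵢ + s) = ρλᵢ²/(ρλᵢ + σ²)`. Hence the objective is `tr(Π M)` for the orthogonal
projection `Π = T(TᴴT)⁻¹Tᴴ` of rank `M_p`. In the eigenbasis of `P` the diagonal weights of `Π`
lie in `[0, 1]` and sum to `M_p`, so `tr(Π M)` is at most the sum of the `M_p` largest `μᵢ`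
(the Ky Fan maximum principle); as `x ↦ ρx²/(ρx + σ²)` is increasing on `x ≥ 0`, these are the
`μᵢ` of the `M_p` largest `λᵢ`. The dominant eigenvectors attain the bound, since for them every
matrix involved is diagonal.
-/

open Matrix ComplexOrder

theorem sum_mul_le_sum_of_threshold {ι : Type*} [Fintype ι] (s : Finset ι) {μ w : ι → ℝ}
    (c : ℝ) (hs : ∀ i ∈ s, c ≤ μ i) (hsc : ∀ i ∉ s, μ i ≤ c)
    (hw0 : ∀ i, 0 ≤ w i) (hw1 : ∀ i, w i ≤ 1) (hw : ∑ i, w i = s.card) :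
    ∑ i, μ i * w i ≤ ∑ i ∈ s, μ i := by
  classical
  have hshift : ∑ i, (μ i - c) * w i ≤ ∑ i ∈ s, (μ i - c) := by
    rw [← Finset.filter_univ_mem s, Finset.sum_filter]
    refine Finset.sum_le_sum fun i _ => ?_
    split_ifs with hi
    · nlinarith [hs i hi, hw1 i]
    · nlinarith [hsc i hi, hw0 i]
  simp only [sub_mul, Finset.sum_sub_distrib, ← Finset.mul_sum, hw, Finset.sum_const,
    nsmul_eq_mul] at hshift
  linarith

theorem Antitone.sum_mul_le_sum_castLE {n k : ℕ} (hk : k ≤ n) {μ w : Fin n → ℝ}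
    (hμ : Antitone μ) (hw0 : ∀ i, 0 ≤ w i) (hw1 : ∀ i, w i ≤ 1) (hw : ∑ i, w i = k) :
    ∑ i, μ i * w i ≤ ∑ i : Fin k, μ (Fin.castLE hk i) := by
  let s := Finset.univ.map (Fin.castLEEmb hk)
  have hs : ∀ i, i ∈ s ↔ (i : ℕ) < k := fun i => by
    simp only [s, Finset.mem_map, Finset.mem_univ, true_and, Fin.coe_castLEEmb]
    exact ⟨fun ⟨a, ha⟩ => ha ▸ a.2, fun h => ⟨⟨i, h⟩, rfl⟩⟩
  obtain ⟨c, hc_top, hc_rest⟩ : ∃ c, (∀ i ∈ s, c ≤ μ i) ∧ ∀ i ∉ s, μ i ≤ c := by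
    rcases hk.lt_or_eq with hlt | rfl
    · exact ⟨μ ⟨k, hlt⟩, fun i hi => hμ (Fin.mk_le_mk.2 ((hs i).1 hi).le),
        fun i hi => hμ (Fin.mk_le_mk.2 (not_lt.1 (mt (hs i).2 hi)))⟩
    · obtain ⟨c, hc⟩ := (Set.finite_range μ).bddBelow
      exact ⟨c, fun i _ => hc ⟨i, rfl⟩, fun i hi => absurd ((hs i).2 i.2) hi⟩
  simpa [s] using sum_mul_le_sum_of_threshold s c hc_top hc_rest hw0 hw1 (by simpa [s] using hw)

theorem monotoneOn_mul_sq_div_mul_add {ρ σ2 : ℝ} (hρ : 0 < ρ) (hσ : 0 < σ2) :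
    MonotoneOn (fun x : ℝ => ρ * x ^ 2 / (ρ * x + σ2)) (Set.Ici 0) := by
  intro x hx y hy hxy
  simp only [Set.mem_Ici] at hx hy
  rw [div_le_div_iff₀ (by positivity) (by positivity)]
  -- the difference of the two sides is this product
  have : 0 ≤ ρ * (y - x) * (ρ * x * y + σ2 * (x + y)) := by
    have := sub_nonneg.2 hxy
    positivity
  nlinarith

section Projection

variable {n m : Type*} [Fintype n] [Fintype m] [DecidableEq m]

open scoped MatrixOrder in
theorem IsStarProjection.re_diag_mem_Icc [DecidableEq n] {p : Matrix n n ℂ}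
    (hp : IsStarProjection p) (i : n) : (p i i).re ∈ Set.Icc 0 1 := by
  have h0 := (Complex.nonneg_iff.1 ((nonneg_iff_posSemidef.1 hp.nonneg).diag_nonneg (i := i))).1
  have h1 := (Complex.nonneg_iff.1 ((le_iff.1 hp.le_one).diag_nonneg (i := i))).1
  simp only [Matrix.sub_apply, one_apply_eq, Complex.sub_re, Complex.one_re] at h1
  exact ⟨h0, by linarith⟩

theorem isStarProjection_mul_inv_mul_conjTranspose (T : Matrix n m ℂ)
    (hT : IsUnit (Tᴴ * T).det) : IsStarProjection (T * (Tᴴ * T)⁻¹ * Tᴴ) where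
  isIdempotentElem :=
    calc T * (Tᴴ * T)⁻¹ * Tᴴ * (T * (Tᴴ * T)⁻¹ * Tᴴ)
        = T * ((Tᴴ * T)⁻¹ * (Tᴴ * T)) * (Tᴴ * T)⁻¹ * Tᴴ := by simp only [Matrix.mul_assoc]
      _ = T * (Tᴴ * T)⁻¹ * Tᴴ := by rw [nonsing_inv_mul _ hT, Matrix.mul_one]
  isSelfAdjoint := by
    have hH : ((Tᴴ * T)⁻¹)ᴴ = (Tᴴ * T)⁻¹ := by
      rw [conjTranspose_nonsing_inv, conjTranspose_mul, conjTranspose_conjTranspose]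
    simp only [IsSelfAdjoint, star_eq_conjTranspose, conjTranspose_mul,
      conjTranspose_conjTranspose, hH, Matrix.mul_assoc]

theorem trace_mul_inv_mul_conjTranspose (T : Matrix n m ℂ) (hT : IsUnit (Tᴴ * T).det) :
    trace (T * (Tᴴ * T)⁻¹ * Tᴴ) = Fintype.card m := by
  rw [trace_mul_comm, ← Matrix.mul_assoc, mul_nonsing_inv _ hT, trace_one]

end Projection

theorem re_trace_inv_mul_diagonal_le {N k : ℕ} (hk : k ≤ N) (T : Matrix (Fin N) (Fin k) ℂ)
    (hT : IsUnit (Tᴴ * T).det) {μ : Fin N → ℝ} (hμ : Antitone μ) :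
    (trace ((Tᴴ * T)⁻¹ * (Tᴴ * diagonal (fun i => (μ i : ℂ)) * T))).re ≤
      ∑ i : Fin k, μ (Fin.castLE hk i) := by
  set p := T * (Tᴴ * T)⁻¹ * Tᴴ
  have hp := isStarProjection_mul_inv_mul_conjTranspose T hT
  have htr : trace ((Tᴴ * T)⁻¹ * (Tᴴ * diagonal (fun i => (μ i : ℂ)) * T))
      = trace (p * diagonal (fun i => (μ i : ℂ))) := by
    rw [← Matrix.mul_assoc, ← Matrix.mul_assoc, trace_mul_comm]
    simp only [p, Matrix.mul_assoc]
  have hre : (trace (p * diagonal (fun i => (μ i : ℂ)))).re = ∑ i, μ i * (p i i).re := by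
    simp [trace, mul_diagonal, Complex.re_sum, mul_comm]
  rw [htr, hre]
  refine hμ.sum_mul_le_sum_castLE hk (fun i => (hp.re_diag_mem_Icc i).1)
    (fun i => (hp.re_diag_mem_Icc i).2) ?_
  simpa [trace, Complex.re_sum] using congrArg Complex.re (trace_mul_inv_mul_conjTranspose T hT)

section Objective

variable {n m : Type*} [Fintype n] [Fintype m] [DecidableEq n] [DecidableEq m]

noncomputable def pilotObjective (P : Matrix n n ℂ) (σ2 : ℝ) (S : Matrix n m ℂ) : ℂ :=
  trace ((Sᴴ * P * S + (σ2 : ℂ) • 1)⁻¹ * (Sᴴ * P ^ 2 * S))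

omit [Fintype m] [DecidableEq n] [DecidableEq m] in
theorem conjTranspose_mul_unitary_conj_mul (U X : Matrix n n ℂ) (S : Matrix n m ℂ) :
    Sᴴ * (U * X * Uᴴ) * S = (Uᴴ * S)ᴴ * X * (Uᴴ * S) := by
  simp only [conjTranspose_mul, conjTranspose_conjTranspose, Matrix.mul_assoc]

theorem pilotObjective_unitary_conj {U : Matrix n n ℂ} (hU : Uᴴ * U = 1) (D : Matrix n n ℂ)
    (σ2 : ℝ) (S : Matrix n m ℂ) :
    pilotObjective (U * D * Uᴴ) σ2 S = pilotObjective D σ2 (Uᴴ * S) := by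
  have hsq : (U * D * Uᴴ) ^ 2 = U * D ^ 2 * Uᴴ :=
    calc (U * D * Uᴴ) ^ 2 = U * D * (Uᴴ * U) * D * Uᴴ := by simp only [sq, Matrix.mul_assoc]
      _ = U * D ^ 2 * Uᴴ := by rw [hU, Matrix.mul_one, sq, Matrix.mul_assoc U]
  rw [pilotObjective, pilotObjective, hsq, conjTranspose_mul_unitary_conj_mul,
    conjTranspose_mul_unitary_conj_mul]

omit [Fintype n] [DecidableEq n] in
theorem trace_inv_diagonal_mul_diagonal {a : m → ℂ} (ha : ∀ i, a i ≠ 0) (b : m → ℂ) :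
    trace ((diagonal a)⁻¹ * diagonal b) = ∑ i, b i / a i := by
  have hinv : (diagonal a)⁻¹ = diagonal a⁻¹ := by
    refine inv_eq_left_inv ?_
    rw [diagonal_mul_diagonal, ← diagonal_one]
    exact congrArg diagonal (funext fun i => inv_mul_cancel₀ (ha i))
  simp [hinv, trace_diagonal, div_eq_inv_mul]

omit [Fintype m] in
theorem conjTranspose_smul_submatrix_one_mul_diagonal (v : n → ℂ) {c : m → n}
    (hc : Function.Injective c) (a : ℝ) :
    ((a : ℂ) • (1 : Matrix n n ℂ).submatrix id c)ᴴ * diagonal v *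
        ((a : ℂ) • (1 : Matrix n n ℂ).submatrix id c) = ((a ^ 2 : ℝ) : ℂ) • diagonal (v ∘ c) := by
  have h1 : (1 : Matrix n n ℂ).submatrix c id * diagonal v * (1 : Matrix n n ℂ).submatrix id c
      = diagonal (v ∘ c) := by
    have hl := one_submatrix_mul c (Equiv.refl n) (diagonal v)
    have hr := mul_submatrix_one (Equiv.refl n) c ((diagonal v).submatrix c id)
    simp only [Equiv.coe_refl, Equiv.refl_symm, Function.id_comp] at hl hr
    rw [hl, hr, submatrix_submatrix, Function.comp_id, Function.id_comp, submatrix_diagonal _ _ hc]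
  rw [conjTranspose_smul, conjTranspose_submatrix, conjTranspose_one, Matrix.smul_mul,
    Matrix.smul_mul, Matrix.mul_smul, smul_smul, h1, Complex.star_def, Complex.conj_ofReal, sq,
    Complex.ofReal_mul]

theorem pilotObjective_diagonal_submatrix_one (d : n → ℝ) {c : m → n}
    (hc : Function.Injective c) {ρ σ2 : ℝ} (hρ : 0 ≤ ρ) (hd : ∀ j, ρ * d (c j) + σ2 ≠ 0) :
    pilotObjective (diagonal fun i => (d i : ℂ)) σ2
        ((Real.sqrt ρ : ℂ) • (1 : Matrix n n ℂ).submatrix id c) =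
      ∑ j, ((ρ * d (c j) ^ 2 / (ρ * d (c j) + σ2) : ℝ) : ℂ) := by
  have hA : (ρ : ℂ) • diagonal (fun j => (d (c j) : ℂ)) + (σ2 : ℂ) • 1
      = diagonal fun j => ((ρ * d (c j) + σ2 : ℝ) : ℂ) := by
    rw [smul_one_eq_diagonal, ← diagonal_smul, diagonal_add]
    push_cast
    rfl
  rw [pilotObjective, diagonal_pow, conjTranspose_smul_submatrix_one_mul_diagonal _ hc,
    conjTranspose_smul_submatrix_one_mul_diagonal _ hc, Real.sq_sqrt hρ]
  simp only [Function.comp_def]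
  rw [hA, ← diagonal_smul, trace_inv_diagonal_mul_diagonal (fun j => by exact_mod_cast hd j)]
  push_cast
  rfl

omit [Fintype m] [DecidableEq m] in
theorem conjTranspose_diagonal_ofReal_mul (r : n → ℝ) (S : Matrix n m ℂ) (X : Matrix n n ℂ) :
    (diagonal (fun i => (r i : ℂ)) * S)ᴴ * X * (diagonal (fun i => (r i : ℂ)) * S) =
      Sᴴ * (diagonal (fun i => (r i : ℂ)) * X * diagonal (fun i => (r i : ℂ))) * S := by
  rw [conjTranspose_mul, diagonal_conjTranspose]
  simp only [Pi.star_def, Complex.star_def, Complex.conj_ofReal, Matrix.mul_assoc]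

omit [DecidableEq n] in
theorem Matrix.PosSemidef.posDef_conjTranspose_mul_mul_add_smul_one {P : Matrix n n ℂ}
    (hP : P.PosSemidef) (S : Matrix n m ℂ) {σ2 : ℝ} (hσ : 0 < σ2) :
    (Sᴴ * P * S + (σ2 : ℂ) • 1).PosDef :=
  PosDef.posSemidef_add (hP.conjTranspose_mul_mul_same S)
    (PosDef.one.smul (Complex.zero_lt_real.2 hσ))

end Objective

theorem re_pilotObjective_diagonal_le {N k : ℕ} (hk : k ≤ N) {lam : Fin N → ℝ}
    (hlam : ∀ i, 0 ≤ lam i) (hanti : Antitone lam) {ρ σ2 : ℝ} (hρ : 0 < ρ) (hσ : 0 < σ2)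
    (S : Matrix (Fin N) (Fin k) ℂ) (hS : Sᴴ * S = (ρ : ℂ) • 1) :
    (pilotObjective (diagonal fun i => (lam i : ℂ)) σ2 S).re ≤
      ∑ i : Fin k, ρ * lam (Fin.castLE hk i) ^ 2 / (ρ * lam (Fin.castLE hk i) + σ2) := by
  set D := diagonal fun i => (lam i : ℂ)
  set μ : Fin N → ℝ := fun i => ρ * lam i ^ 2 / (ρ * lam i + σ2)
  -- `diagonal r` is the square root of `D + (σ²/ρ)I`, so that `TᴴT` is the matrix to be inverted
  set r : Fin N → ℝ := fun i => Real.sqrt ((ρ * lam i + σ2) / ρ)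
  have hr : ∀ i, r i * r i = (ρ * lam i + σ2) / ρ := fun i =>
    Real.mul_self_sqrt (by have := hlam i; positivity)
  set T := diagonal (fun i => (r i : ℂ)) * S
  have hTT : Tᴴ * T = Sᴴ * D * S + (σ2 : ℂ) • 1 := by
    have hr2 : diagonal (fun i => (r i : ℂ) * (r i : ℂ)) = D + ((σ2 / ρ : ℝ) : ℂ) • 1 := by
      rw [smul_one_eq_diagonal, diagonal_add]
      refine congrArg diagonal (funext fun i => ?_)
      rw [← Complex.ofReal_mul, hr, ← Complex.ofReal_add, add_div, mul_div_cancel_left₀ _ hρ.ne']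
    calc Tᴴ * T = Tᴴ * (1 : Matrix (Fin N) (Fin N) ℂ) * T := by rw [Matrix.mul_one]
      _ = Sᴴ * D * S + ((σ2 / ρ : ℝ) : ℂ) • (Sᴴ * S) := by
        rw [conjTranspose_diagonal_ofReal_mul, Matrix.mul_one, diagonal_mul_diagonal, hr2,
          Matrix.mul_add, Matrix.add_mul, Matrix.mul_smul, Matrix.smul_mul, Matrix.mul_one]
      _ = Sᴴ * D * S + (σ2 : ℂ) • 1 := by
        rw [hS, smul_smul, ← Complex.ofReal_mul, div_mul_cancel₀ _ hρ.ne']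
  have hTμT : Tᴴ * diagonal (fun i => (μ i : ℂ)) * T = Sᴴ * D ^ 2 * S := by
    have hrμ : ∀ i, r i * μ i * r i = lam i ^ 2 := fun i => by
      have := hlam i
      rw [mul_right_comm, hr]
      simp only [μ]
      field_simp
    rw [conjTranspose_diagonal_ofReal_mul, diagonal_mul_diagonal, diagonal_mul_diagonal,
      diagonal_pow]
    refine congrArg (fun X => Sᴴ * X * S) (congrArg diagonal (funext fun i => ?_))
    rw [Pi.pow_apply]
    exact_mod_cast hrμ i
  have hμ : Antitone μ := fun i j hij =>
    monotoneOn_mul_sq_div_mul_add hρ hσ (hlam j) (hlam i) (hanti hij)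
  have hD : D.PosSemidef := posSemidef_diagonal_iff.2 fun i => by exact_mod_cast hlam i
  have hA := hD.posDef_conjTranspose_mul_mul_add_smul_one S hσ
  rw [pilotObjective, ← hTT, ← hTμT]
  exact re_trace_inv_mul_diagonal_le hk T (hTT ▸ (isUnit_iff_isUnit_det _).mp hA.isUnit) hμ

theorem stmt11_general {Nt Mp : ℕ} (hMp : Mp ≤ Nt)
    (P : Matrix (Fin Nt) (Fin Nt) ℂ)
    (U : Matrix (Fin Nt) (Fin Nt) ℂ) (hU : Uᴴ * U = 1 ∧ U * Uᴴ = 1)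
    (lam : Fin Nt → ℝ) (hlam : ∀ i, 0 ≤ lam i)
    (hdec : ∀ i j : Fin Nt, i ≤ j → lam j ≤ lam i)
    (hPU : P = U * Matrix.diagonal (fun i => (lam i : ℂ)) * Uᴴ)
    (ρ σ2 : ℝ) (hρ : 0 < ρ) (hσ : 0 < σ2) :
    (∀ S : Matrix (Fin Nt) (Fin Mp) ℂ, Sᴴ * S = (ρ : ℂ) • 1 →
        (Matrix.trace ((Sᴴ * P * S + (σ2 : ℂ) • 1)⁻¹ * (Sᴴ * P ^ 2 * S))).re ≤
          ∑ i : Fin Mp, ρ * (lam (Fin.castLE hMp i)) ^ 2 /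
            (ρ * lam (Fin.castLE hMp i) + σ2)) ∧
    (∀ S : Matrix (Fin Nt) (Fin Mp) ℂ,
        S = (Real.sqrt ρ : ℂ) • U.submatrix id (Fin.castLE hMp) →
        (Matrix.trace ((Sᴴ * P * S + (σ2 : ℂ) • 1)⁻¹ * (Sᴴ * P ^ 2 * S))).re =
          ∑ i : Fin Mp, ρ * (lam (Fin.castLE hMp i)) ^ 2 /
            (ρ * lam (Fin.castLE hMp i) + σ2)) := by
  obtain ⟨hU1, hU2⟩ := hU
  have hobj : ∀ S : Matrix (Fin Nt) (Fin Mp) ℂ,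
      trace ((Sᴴ * P * S + (σ2 : ℂ) • 1)⁻¹ * (Sᴴ * P ^ 2 * S)) =
        pilotObjective (diagonal fun i => (lam i : ℂ)) σ2 (Uᴴ * S) := fun S => by
    rw [← pilotObjective_unitary_conj hU1, ← hPU, pilotObjective]
  refine ⟨fun S hS => ?_, fun S hS => ?_⟩
  · have hUS : (Uᴴ * S)ᴴ * (Uᴴ * S) = (ρ : ℂ) • 1 := by
      rw [conjTranspose_mul, conjTranspose_conjTranspose, Matrix.mul_assoc, ← Matrix.mul_assoc U,
        hU2, Matrix.one_mul, hS]
    rw [hobj]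
    exact re_pilotObjective_diagonal_le hMp hlam hdec hρ hσ _ hUS
  · have hUS : Uᴴ * S =
        (Real.sqrt ρ : ℂ) • (1 : Matrix (Fin Nt) (Fin Nt) ℂ).submatrix id (Fin.castLE hMp) := by
      rw [hS, Matrix.mul_smul, ← hU1]
      rfl
    have hden : ∀ j, ρ * lam (Fin.castLE hMp j) + σ2 ≠ 0 := fun j =>
      (add_pos_of_nonneg_of_pos (mul_nonneg hρ.le (hlam _)) hσ).ne'
    rw [hobj, hUS, pilotObjective_diagonal_submatrix_one lam (Fin.castLE_injective hMp) hρ.le hden,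
      Complex.re_sum]
    simp only [Complex.ofReal_re]

/-- Proposition 4 key step: over semi-unitary pilot matrices
`S` with `SᴴS = ρI`, the objective `tr((SᴴPS+σ²I)⁻¹ SᴴP²S)` is maximized by the
`M_p` dominant eigenvectors of `P`, with maximum `Σ_{i<M_p} ρλ_i²/(ρλ_i+σ²)`. -/
theorem stmt11 {Nt Mp : ℕ} (hMp : Mp ≤ Nt)
    (P : Matrix (Fin Nt) (Fin Nt) ℂ) (hP : P.PosSemidef)
    (U : Matrix (Fin Nt) (Fin Nt) ℂ) (hU : Uᴴ * U = 1 ∧ U * Uᴴ = 1)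
    (lam : Fin Nt → ℝ) (hlam : ∀ i, 0 ≤ lam i)
    (hdec : ∀ i j : Fin Nt, i ≤ j → lam j ≤ lam i)
    (hPU : P = U * Matrix.diagonal (fun i => (lam i : ℂ)) * Uᴴ)
    (ρ σ2 : ℝ) (hρ : 0 < ρ) (hσ : 0 < σ2) :
    (∀ S : Matrix (Fin Nt) (Fin Mp) ℂ, Sᴴ * S = (ρ : ℂ) • 1 →
        (Matrix.trace ((Sᴴ * P * S + (σ2 : ℂ) • 1)⁻¹ * (Sᴴ * P ^ 2 * S))).re ≤
          ∑ i : Fin Mp, ρ * (lam (Fin.castLE hMp i)) ^ 2 /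
            (ρ * lam (Fin.castLE hMp i) + σ2)) ∧
    (∀ S : Matrix (Fin Nt) (Fin Mp) ℂ,
        S = (Real.sqrt ρ : ℂ) • U.submatrix id (Fin.castLE hMp) →
        (Matrix.trace ((Sᴴ * P * S + (σ2 : ℂ) • 1)⁻¹ * (Sᴴ * P ^ 2 * S))).re =
          ∑ i : Fin Mp, ρ * (lam (Fin.castLE hMp i)) ^ 2 /
            (ρ * lam (Fin.castLE hMp i) + σ2)) :=
  stmt11_general hMp P U hU lam hlam hdec hPU ρ σ2 hρ hσ
end

section
/- (Water-filling structure of the MISO power allocation) Consider minimizing Σ_{i∈I} a^{2m_i} σ² λ_i / (ρ_i λ_i + σ²) over ρ_i ≥ 0 with Σ_{i∈I} ρ_i = P_tot, where λ_i > 0, m_i are nonnegative integers, a ∈ (0,1], σ² > 0, P_tot > 0. The optimal solution is ρ_i = max( a^{m_i} σ/√ν − σ²/λ_i , 0 ) where ν > 0 is chosen so that Σ_i ρ_i = P_tot. -/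
/-- Convexity tangent-line bound for `c / (x*lam + σ2)`. -/
lemma convex_tangent (c lam σ2 : ℝ) (hc : 0 ≤ c) (hl : 0 < lam) (hσ : 0 < σ2)
    (x y : ℝ) (hx : 0 ≤ x) (hy : 0 ≤ y) :
    c / (x * lam + σ2) - c * lam / (x * lam + σ2) ^ 2 * (y - x) ≤
      c / (y * lam + σ2) := by
  have hX : 0 < x * lam + σ2 := by positivity
  have hY : 0 < y * lam + σ2 := by positivity
  have key : c / (y * lam + σ2) - (c / (x * lam + σ2)
      - c * lam / (x * lam + σ2) ^ 2 * (y - x)) =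
      c * ((x * lam + σ2) - (y * lam + σ2)) ^ 2 /
        ((y * lam + σ2) * (x * lam + σ2) ^ 2) := by
    field_simp
    ring
  nlinarith [div_nonneg (mul_nonneg hc (sq_nonneg ((x * lam + σ2) - (y * lam + σ2))))
      (le_of_lt (by positivity : (0:ℝ) < (y * lam + σ2) * (x * lam + σ2) ^ 2))]

/-- water-filling structure of the MISO power allocation: the
allocation `ρ_i = max(a^{m_i}σ/√ν − σ²/λ_i, 0)`, with `ν > 0` chosen to meet
the total power constraint, minimizes `Σ_i a^{2m_i}σ²λ_i/(ρ_iλ_i+σ²)` over all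
feasible power allocations. -/
theorem stmt14 {n : ℕ} (lam : Fin n → ℝ) (hlam : ∀ i, 0 < lam i)
    (m : Fin n → ℕ) (a : ℝ) (ha : 0 < a) (ha1 : a ≤ 1)
    (σ2 : ℝ) (hσ : 0 < σ2) (T : ℝ) (hT : 0 < T)
    (ν : ℝ) (hν : 0 < ν) (ρopt : Fin n → ℝ)
    (hρopt : ∀ i, ρopt i = max (a ^ m i * Real.sqrt σ2 / Real.sqrt ν - σ2 / lam i) 0)
    (hsum : ∑ i, ρopt i = T) :
    ∀ ρ : Fin n → ℝ, (∀ i, 0 ≤ ρ i) → ∑ i, ρ i = T →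
      ∑ i, a ^ (2 * m i) * σ2 * lam i / (ρopt i * lam i + σ2) ≤
        ∑ i, a ^ (2 * m i) * σ2 * lam i / (ρ i * lam i + σ2) := by
  intro ρ hρ hsumρ
  have hsν : 0 < Real.sqrt ν := Real.sqrt_pos.mpr hν
  have hsσ : 0 < Real.sqrt σ2 := Real.sqrt_pos.mpr hσ
  have hν2 : Real.sqrt ν ^ 2 = ν := Real.sq_sqrt hν.le
  have hσ2 : Real.sqrt σ2 ^ 2 = σ2 := Real.sq_sqrt hσ.le
  -- per coordinate KKT inequality
  have key : ∀ i, a ^ (2 * m i) * σ2 * lam i / (ρopt i * lam i + σ2) + ν * ρopt i ≤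
      a ^ (2 * m i) * σ2 * lam i / (ρ i * lam i + σ2) + ν * ρ i := by
    intro i
    have hl := hlam i
    have hl0 : lam i ≠ 0 := ne_of_gt hl
    have hν0 : Real.sqrt ν ≠ 0 := ne_of_gt hsν
    set c := a ^ (2 * m i) * σ2 * lam i with hc
    have hcpos : 0 < c := mul_pos (mul_pos (pow_pos ha _) hσ) hl
    have hρopt0 : 0 ≤ ρopt i := by rw [hρopt i]; exact le_max_right _ _
    have hconv := convex_tangent c (lam i) σ2 hcpos.le hl hσ (ρopt i) (ρ i) hρopt0 (hρ i)
    have hX : 0 < ρopt i * lam i + σ2 := add_pos_of_nonneg_of_pos (mul_nonneg hρopt0 hl.le) hσ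
    have ham : a ^ (2 * m i) = (a ^ m i) ^ 2 := by rw [← pow_mul, mul_comm]
    rcases le_or_gt (a ^ m i * Real.sqrt σ2 / Real.sqrt ν - σ2 / lam i) 0 with h0 | h0
    · -- ρopt i = 0, slope ≤ ν
      have hx0 : ρopt i = 0 := by rw [hρopt i, max_eq_right h0]
      rw [hx0] at hconv ⊢
      have h1 : a ^ m i * Real.sqrt σ2 * lam i ≤ σ2 * Real.sqrt ν := by
        have := sub_nonpos.mp h0
        rw [div_le_div_iff₀ hsν hl] at this
        nlinarith
      have h2 : (a ^ m i * Real.sqrt σ2 * lam i) ^ 2 ≤ (σ2 * Real.sqrt ν) ^ 2 := by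
        have hlhs : 0 ≤ a ^ m i * Real.sqrt σ2 * lam i := mul_nonneg (mul_nonneg (pow_pos ha _).le hsσ.le) hl.le
        nlinarith
      have h2' : (a ^ m i) ^ 2 * σ2 * lam i ^ 2 ≤ σ2 ^ 2 * ν := by
        calc (a ^ m i) ^ 2 * σ2 * lam i ^ 2
            = (a ^ m i * Real.sqrt σ2 * lam i) ^ 2 := by
              rw [mul_pow, mul_pow, hσ2]
          _ ≤ (σ2 * Real.sqrt ν) ^ 2 := h2
          _ = σ2 ^ 2 * ν := by rw [mul_pow, hν2]
      have hslope : c * lam i / σ2 ^ 2 ≤ ν := by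
        rw [div_le_iff₀ (by positivity), hc, ham]
        nlinarith [h2']
      have hterm : c * lam i / σ2 ^ 2 * ρ i ≤ ν * ρ i :=
        mul_le_mul_of_nonneg_right hslope (hρ i)
      simp only [zero_mul, zero_add, mul_zero, add_zero, sub_zero] at hconv ⊢
      linarith
    · -- ρopt i > 0, slope = ν
      have hx : ρopt i = a ^ m i * Real.sqrt σ2 / Real.sqrt ν - σ2 / lam i := by
        rw [hρopt i, max_eq_left h0.le]
      have hXval : ρopt i * lam i + σ2 = a ^ m i * Real.sqrt σ2 * lam i / Real.sqrt ν := by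
        rw [hx]; field_simp [hν0, hl0]; ring
      have hX2 : (ρopt i * lam i + σ2) ^ 2 = (a ^ m i) ^ 2 * σ2 * lam i ^ 2 / ν := by
        rw [hXval, div_pow, mul_pow, mul_pow, hσ2, hν2]
      have hslope : c * lam i / (ρopt i * lam i + σ2) ^ 2 = ν := by
        rw [hX2, hc, ham]
        field_simp [hl0, ne_of_gt hν, ne_of_gt hσ, ne_of_gt (pow_pos ha (m i))]
      rw [hslope] at hconv
      linarith
  have hsum1 : ∑ i, (a ^ (2 * m i) * σ2 * lam i / (ρopt i * lam i + σ2) + ν * ρopt i) ≤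
      ∑ i, (a ^ (2 * m i) * σ2 * lam i / (ρ i * lam i + σ2) + ν * ρ i) :=
    Finset.sum_le_sum fun i _ => key i
  rw [Finset.sum_add_distrib, Finset.sum_add_distrib, ← Finset.mul_sum, ← Finset.mul_sum,
    hsum, hsumρ] at hsum1
  linarith
end
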